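/- arXiv:1908.03517 — 5 statements merged into one kernel-verified Lean document; each statement's English description precedes it below -/
import Mathlib

section
/- Let F : ℝⁿ → ℝⁿ be strongly monotone with modulus μ > 0 and Lipschitz continuous with constant L > 0, let g : ℝⁿ → ℝ ∪ {∞} be a proper lower semicontinuous convex function, and let λ ∈ (0, 2μ/L²). Define y(x) := prox_{λg}(x - λ F(x)), and let x* be a solution of the mixed variational inequality ⟨F(x*), x - x*⟩ + g(x) - g(x*) ≥ 0 for all x. Then ‖y(x) - x*‖ ≤ c ‖x - x*‖ for all x ∈ ℝⁿ, where c = 1/√(1 + 2λμ - λ²L²) ∈ (0,1). -/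
open scoped RealInnerProductSpace

set_option maxHeartbeats 1000000 in
/-- Theorem 1 of the paper: the proximal map `y x = prox_{λ g}(x - λ F x)` is a
contraction towards the solution `x*` of the mixed variational inequality. -/
theorem stmt_2 {n : ℕ} (F : EuclideanSpace ℝ (Fin n) → EuclideanSpace ℝ (Fin n))
    (g : EuclideanSpace ℝ (Fin n) → EReal) (μ L lam : ℝ) (hμ : 0 < μ) (hL : 0 < L)
    (hmono : ∀ x z, μ * ‖x - z‖ ^ 2 ≤ ⟪F x - F z, x - z⟫)
    (hlip : ∀ x z, ‖F x - F z‖ ≤ L * ‖x - z‖)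
    (hproper : ∃ x, g x ≠ ⊤) (hnobot : ∀ x, g x ≠ ⊥)
    (hlsc : LowerSemicontinuous g)
    (hconv : ∀ x z : EuclideanSpace ℝ (Fin n), ∀ t : ℝ, 0 ≤ t → t ≤ 1 →
      g (t • x + (1 - t) • z) ≤ (t : EReal) * g x + ((1 - t : ℝ) : EReal) * g z)
    (hlam : lam ∈ Set.Ioo 0 (2 * μ / L ^ 2))
    (y : EuclideanSpace ℝ (Fin n) → EuclideanSpace ℝ (Fin n))
    -- `y x` is the proximal point: the minimizer of `z ↦ lam • g z + ½ ‖(x - lam • F x) - z‖²`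
    (hy : ∀ x z, (lam : EReal) * g (y x) + ((‖(x - lam • F x) - y x‖ ^ 2 / 2 : ℝ) : EReal) ≤
      (lam : EReal) * g z + ((‖(x - lam • F x) - z‖ ^ 2 / 2 : ℝ) : EReal))
    (xstar : EuclideanSpace ℝ (Fin n))
    -- `x*` solves the MVIP
    (hsol : ∀ x, 0 ≤ ((⟪F xstar, x - xstar⟫ : ℝ) : EReal) + g x - g xstar) :
    ∀ x, ‖y x - xstar‖ ≤
      (1 / Real.sqrt (1 + 2 * lam * μ - lam ^ 2 * L ^ 2)) * ‖x - xstar‖ := by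
  obtain ⟨hlam0, hlam2⟩ := hlam
  obtain ⟨x₀, hx₀⟩ := hproper
  obtain ⟨g0, hg0⟩ : ∃ r : ℝ, g x₀ = (r : EReal) :=
    ⟨(g x₀).toReal, ((g x₀).coe_toReal hx₀ (hnobot x₀)).symm⟩
  -- g xstar is finite
  have hgbtop : g xstar ≠ ⊤ := by
    intro h
    have := hsol x₀
    rw [h, hg0] at this
    rw [EReal.sub_top] at this
    exact (not_le.mpr (EReal.bot_lt_zero)) this
  obtain ⟨gb, hgb⟩ : ∃ r : ℝ, g xstar = (r : EReal) :=
    ⟨(g xstar).toReal, ((g xstar).coe_toReal hgbtop (hnobot xstar)).symm⟩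
  intro x
  set a := y x with ha
  set b := xstar with hb
  set u := x - lam • F x with hu
  -- g a is finite
  have hgatop : g a ≠ ⊤ := by
    intro h
    have := hy x x₀
    rw [h, hg0] at this
    rw [EReal.mul_top_of_pos (by exact_mod_cast hlam0)] at this
    rw [EReal.top_add_of_ne_bot (by simp)] at this
    norm_cast at this
  obtain ⟨ga, hga⟩ : ∃ r : ℝ, g a = (r : EReal) :=
    ⟨(g a).toReal, ((g a).coe_toReal hgatop (hnobot a)).symm⟩
  -- abbreviations
  set I : ℝ := ⟪u - a, b - a⟫ with hI
  set N : ℝ := ‖b - a‖ ^ 2 with hN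
  -- Claim 1 approximate: for all t ∈ (0,1], I ≤ lam * (gb - ga) + t * N / 2
  have key : ∀ t : ℝ, 0 < t → t ≤ 1 → I ≤ lam * (gb - ga) + t * N / 2 := by
    intro t ht0 ht1
    set z := t • b + (1 - t) • a with hz
    have hconvz := hconv b a t ht0.le ht1
    rw [hga, hgb, ← hz] at hconvz
    have hzne : g z ≠ ⊤ := by
      intro h
      rw [h] at hconvz
      have : ((t : EReal) * (gb : EReal) + ((1 - t : ℝ) : EReal) * (ga : EReal)) =
          (((t * gb + (1 - t) * ga : ℝ)) : EReal) := by norm_cast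
      rw [this] at hconvz
      exact (EReal.coe_lt_top _).not_ge hconvz
    obtain ⟨gz, hgz⟩ : ∃ r : ℝ, g z = (r : EReal) :=
      ⟨(g z).toReal, ((g z).coe_toReal hzne (hnobot z)).symm⟩
    rw [hgz] at hconvz
    have hgzle : gz ≤ t * gb + (1 - t) * ga := by exact_mod_cast hconvz
    have hyz := hy x z
    rw [← ha, ← hu, hga, hgz] at hyz
    have hyz' : lam * ga + ‖u - a‖ ^ 2 / 2 ≤ lam * gz + ‖u - z‖ ^ 2 / 2 := by
      exact_mod_cast hyz
    -- expand ‖u - z‖²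
    have hvec : u - z = (u - a) - t • (b - a) := by
      rw [hz]; module
    have hnorm : ‖u - z‖ ^ 2 = ‖u - a‖ ^ 2 - 2 * (t * I) + t ^ 2 * N := by
      rw [hvec, norm_sub_sq_real, real_inner_smul_right, norm_smul]
      rw [hI, hN]
      simp [Real.norm_eq_abs, abs_of_pos ht0]
      ring
    rw [hnorm] at hyz'
    have h1 : 0 ≤ lam * t * (gb - ga) - t * I + t ^ 2 * N / 2 := by nlinarith
    nlinarith [mul_pos hlam0 ht0]
  -- Claim 1: I ≤ lam * (gb - ga)
  have claim1 : I ≤ lam * (gb - ga) := by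
    apply le_of_forall_pos_le_add
    intro ε hε
    have hN0 : 0 ≤ N := by rw [hN]; positivity
    have ht0 : 0 < min 1 (ε / (N + 1)) := by
      apply lt_min one_pos; positivity
    have := key (min 1 (ε / (N + 1))) ht0 (min_le_left _ _)
    have hle : min 1 (ε / (N + 1)) ≤ ε / (N + 1) := min_le_right _ _
    have : min 1 (ε / (N + 1)) * N / 2 ≤ ε := by
      have h2 : min 1 (ε / (N + 1)) * N ≤ (ε / (N + 1)) * N := by
        apply mul_le_mul_of_nonneg_right hle hN0
      have h3 : (ε / (N + 1)) * N ≤ ε := by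
        rw [div_mul_eq_mul_div, div_le_iff₀ (by linarith)]
        nlinarith
      linarith
    linarith [key (min 1 (ε / (N + 1))) ht0 (min_le_left _ _)]
  -- Claim 2: gb - ga ≤ ⟪F b, a - b⟫
  have claim2 : gb - ga ≤ ⟪F b, a - b⟫ := by
    have := hsol a
    rw [hga, hgb] at this
    have h : (0 : ℝ) ≤ ⟪F b, a - b⟫ + ga - gb := by exact_mod_cast this
    linarith
  -- combine: ‖d‖² + lam * ⟪G, d⟫ ≤ ⟪e, d⟫  with d = a - b, e = x - b, G = F x - F b
  set d := a - b with hd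
  set e := x - b with he
  set G := F x - F b with hG
  have hcomb : ‖d‖ ^ 2 + lam * ⟪G, d⟫ ≤ ⟪e, d⟫ := by
    have h1 : I ≤ lam * ⟪F b, a - b⟫ := by
      calc I ≤ lam * (gb - ga) := claim1
      _ ≤ lam * ⟪F b, a - b⟫ := by nlinarith
    have hIexp : I = -⟪x - a, d⟫ + lam * ⟪F x, d⟫ := by
      rw [hI, hu, hd]
      have : x - lam • F x - a = (x - a) - lam • F x := by module
      rw [this, inner_sub_left, real_inner_smul_left]
      have : b - a = -(a - b) := by module
      rw [this, inner_neg_right, inner_neg_right]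
      ring
    have hFb : ⟪F b, a - b⟫ = ⟪F b, d⟫ := by rw [hd]
    have hxad : ⟪x - a, d⟫ = ⟪e, d⟫ - ‖d‖ ^ 2 := by
      have : x - a = e - d := by rw [he, hd]; module
      rw [this, inner_sub_left, real_inner_self_eq_norm_sq]
    have hGd : ⟪G, d⟫ = ⟪F x, d⟫ - ⟪F b, d⟫ := by rw [hG, inner_sub_left]
    rw [hIexp, hFb] at h1
    rw [hGd]
    linarith [hxad ▸ h1]
  -- finish
  have hs : 0 < 2 * lam * μ - lam ^ 2 * L ^ 2 := by
    have hL2 : (0:ℝ) < L ^ 2 := by positivity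
    have h4 := (lt_div_iff₀ hL2).mp hlam2
    calc (0:ℝ) < lam * (2 * μ - lam * L ^ 2) := mul_pos hlam0 (by linarith)
    _ = 2 * lam * μ - lam ^ 2 * L ^ 2 := by ring
  have h1 : μ * ‖e‖ ^ 2 ≤ ⟪G, e⟫ := by rw [hG, he]; exact hmono x b
  have h2 : ‖G‖ ≤ L * ‖e‖ := by rw [hG, he]; exact hlip x b
  have hdn : ‖d‖ ≤ ‖e - lam • G‖ := by
    have hcs : ⟪e - lam • G, d⟫ ≤ ‖e - lam • G‖ * ‖d‖ := real_inner_le_norm _ _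
    have hlow : ‖d‖ ^ 2 ≤ ⟪e - lam • G, d⟫ := by
      rw [inner_sub_left, real_inner_smul_left]; linarith
    rcases eq_or_lt_of_le (norm_nonneg d) with h | h
    · rw [← h]; exact norm_nonneg _
    · refine le_of_mul_le_mul_right ?_ h
      calc ‖d‖ * ‖d‖ = ‖d‖ ^ 2 := by ring
      _ ≤ ⟪e - lam • G, d⟫ := hlow
      _ ≤ ‖e - lam • G‖ * ‖d‖ := hcs
  have hsq : ‖e - lam • G‖ ^ 2 ≤ (1 - (2 * lam * μ - lam ^ 2 * L ^ 2)) * ‖e‖ ^ 2 := by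
    rw [norm_sub_sq_real, real_inner_smul_right, norm_smul]
    simp only [Real.norm_eq_abs, abs_of_pos hlam0]
    have hcomm : ⟪e, G⟫ = ⟪G, e⟫ := real_inner_comm _ _
    have hG2 : ‖G‖ ^ 2 ≤ (L * ‖e‖) ^ 2 := pow_le_pow_left₀ (norm_nonneg G) h2 2
    have k1 := mul_le_mul_of_nonneg_left h1 hlam0.le
    have k2 := mul_le_mul_of_nonneg_left hG2 (sq_nonneg lam)
    nlinarith [k1, k2, hcomm]
  have hd2 : ‖d‖ ^ 2 ≤ (1 - (2 * lam * μ - lam ^ 2 * L ^ 2)) * ‖e‖ ^ 2 :=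
    le_trans (pow_le_pow_left₀ (norm_nonneg d) hdn 2) hsq
  have hsqrt : 0 < Real.sqrt (1 + 2 * lam * μ - lam ^ 2 * L ^ 2) :=
    Real.sqrt_pos.mpr (by linarith)
  rw [div_mul_eq_mul_div, one_mul, le_div_iff₀ hsqrt]
  have hnn : 0 ≤ ‖d‖ * Real.sqrt (1 + 2 * lam * μ - lam ^ 2 * L ^ 2) := by positivity
  have hsq2 : (‖d‖ * Real.sqrt (1 + 2 * lam * μ - lam ^ 2 * L ^ 2)) ^ 2 ≤ ‖e‖ ^ 2 := by
    rw [mul_pow, Real.sq_sqrt (by linarith : (0:ℝ) ≤ 1 + 2 * lam * μ - lam ^ 2 * L ^ 2)]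
    nlinarith [sq_nonneg (2 * lam * μ - lam ^ 2 * L ^ 2), norm_nonneg e, sq_nonneg ‖e‖]
  calc ‖d‖ * Real.sqrt (1 + 2 * lam * μ - lam ^ 2 * L ^ 2)
      = Real.sqrt ((‖d‖ * Real.sqrt (1 + 2 * lam * μ - lam ^ 2 * L ^ 2)) ^ 2) :=
        (Real.sqrt_sq hnn).symm
    _ ≤ Real.sqrt (‖e‖ ^ 2) := Real.sqrt_le_sqrt hsq2
    _ = ‖e‖ := Real.sqrt_sq (norm_nonneg _)
end

section
/- Let F be strongly monotone with modulus μ and Lipschitz with constant L, g proper lsc convex, λ ∈ (0, 2μ/L²), y(x) := prox_{λg}(x - λF(x)), and x* the unique fixed point of y. Then for X(x) := x - y(x) one has ⟨x - x*, X(x)⟩ ≥ (1-c)‖x - x*‖², where c = 1/√(1+2λμ-λ²L²) ∈ (0,1). In particular ⟨x - x*, X(x)⟩ > 0 for all x ≠ x*. -/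
/-!
The optimality condition of the proximal step, tested along segments with the convexity of `g`,
makes `prox_{λg}` firmly nonexpansive: `‖p - q‖² ≤ ⟪w - v, p - q⟫` for `p = prox(w)`, `q = prox(v)`.
Strong monotonicity and Lipschitz continuity make the forward step `x ↦ x - λF x` Lipschitz with
constant `√(1 - a)`, `a = 2λμ - λ²L² > 0`, and `√(1 - a) ≤ 1/√(1 + a) = c`. Hence
`‖y x - x*‖ ≤ c ‖x - x*‖` since `y x* = x*`, and Cauchy–Schwarz turns this into
`⟪x - x*, x - y x⟫ ≥ (1 - c) ‖x - x*‖²`.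
-/

open scoped RealInnerProductSpace
open Filter Topology

theorem le_of_forall_mem_Ioc_le_add_mul {a b c : ℝ} (h : ∀ t ∈ Set.Ioc (0 : ℝ) 1, a ≤ b + t * c) :
    a ≤ b := by
  have hlim : Tendsto (fun t : ℝ => b + t * c) (𝓝[>] 0) (𝓝 b) := by
    have : Tendsto (fun t : ℝ => b + t * c) (𝓝 0) (𝓝 (b + 0 * c)) :=
      (continuous_const.add (continuous_id.mul continuous_const)).tendsto 0
    simpa using this.mono_left nhdsWithin_le_nhds
  exact ge_of_tendsto hlim (eventually_of_mem (Ioc_mem_nhdsGT one_pos) h)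

section Prox

variable {E : Type*} [NormedAddCommGroup E]

/-- `p ∈ prox_{λg}(w)`. -/
def IsProxPoint (g : E → EReal) (lam : ℝ) (w p : E) : Prop :=
  ∀ z, (lam : EReal) * g p + ((‖w - p‖ ^ 2 / 2 : ℝ) : EReal) ≤
    (lam : EReal) * g z + ((‖w - z‖ ^ 2 / 2 : ℝ) : EReal)

variable {g : E → EReal} {lam : ℝ} {w p : E}

theorem IsProxPoint.ne_top (hp : IsProxPoint g lam w p) (hlam : 0 < lam)
    (hproper : ∃ z, g z ≠ ⊤) : g p ≠ ⊤ := by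
  obtain ⟨z, hz⟩ := hproper
  intro htop
  have hmul : (lam : EReal) * g z ≠ ⊤ := (EReal.mul_ne_top _ _).mpr
    ⟨.inl (EReal.coe_ne_bot _), .inl (EReal.coe_nonneg.mpr hlam.le), .inl (EReal.coe_ne_top _),
      .inr hz⟩
  have hmin := hp z
  rw [htop, EReal.coe_mul_top_of_pos hlam, EReal.top_add_coe, top_le_iff] at hmin
  exact EReal.add_ne_top hmul (EReal.coe_ne_top _) hmin

end Prox

section InnerProductSpace

variable {E : Type*} [NormedAddCommGroup E] [InnerProductSpace ℝ E]

theorem norm_le_of_sq_le_inner {u w : E} (h : ‖u‖ ^ 2 ≤ ⟪w, u⟫) : ‖u‖ ≤ ‖w‖ := by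
  nlinarith [real_inner_le_norm w u, norm_nonneg u, norm_nonneg w]

theorem mul_norm_sq_le_inner_sub {u v : E} {c : ℝ} (h : ‖v‖ ≤ c * ‖u‖) :
    (1 - c) * ‖u‖ ^ 2 ≤ ⟪u, u - v⟫ :=
  calc (1 - c) * ‖u‖ ^ 2 = ‖u‖ ^ 2 - ‖u‖ * (c * ‖u‖) := by ring
    _ ≤ ‖u‖ ^ 2 - ‖u‖ * ‖v‖ := by gcongr
    _ ≤ ‖u‖ ^ 2 - ⟪u, v⟫ := by gcongr; exact real_inner_le_norm u v
    _ = ⟪u, u - v⟫ := by rw [inner_sub_right, real_inner_self_eq_norm_sq]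

theorem norm_sub_smul_sub_le {F : E → E} {μ L lam : ℝ} {x z : E} (hlam : 0 ≤ lam)
    (hmono : μ * ‖x - z‖ ^ 2 ≤ ⟪F x - F z, x - z⟫) (hlip : ‖F x - F z‖ ≤ L * ‖x - z‖) :
    ‖(x - lam • F x) - (z - lam • F z)‖ ≤
      √(1 - (2 * lam * μ - lam ^ 2 * L ^ 2)) * ‖x - z‖ := by
  have hexpand : ‖(x - lam • F x) - (z - lam • F z)‖ ^ 2 =
      ‖x - z‖ ^ 2 - 2 * (lam * ⟪F x - F z, x - z⟫) + lam ^ 2 * ‖F x - F z‖ ^ 2 := by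
    rw [show (x - lam • F x) - (z - lam • F z) = (x - z) - lam • (F x - F z) by module,
      norm_sub_sq_real, real_inner_smul_right, real_inner_comm, norm_smul, mul_pow,
      Real.norm_eq_abs, sq_abs]
  have hlip_sq : ‖F x - F z‖ ^ 2 ≤ (L * ‖x - z‖) ^ 2 := pow_le_pow_left₀ (norm_nonneg _) hlip 2
  have hsq : ‖(x - lam • F x) - (z - lam • F z)‖ ^ 2 ≤
      (1 - (2 * lam * μ - lam ^ 2 * L ^ 2)) * ‖x - z‖ ^ 2 := by
    rw [hexpand]
    nlinarith [mul_le_mul_of_nonneg_left hmono hlam,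
      mul_le_mul_of_nonneg_left hlip_sq (sq_nonneg lam)]
  calc ‖(x - lam • F x) - (z - lam • F z)‖
      = √(‖(x - lam • F x) - (z - lam • F z)‖ ^ 2) := (Real.sqrt_sq (norm_nonneg _)).symm
    _ ≤ √((1 - (2 * lam * μ - lam ^ 2 * L ^ 2)) * ‖x - z‖ ^ 2) := Real.sqrt_le_sqrt hsq
    _ = √(1 - (2 * lam * μ - lam ^ 2 * L ^ 2)) * ‖x - z‖ := by
      rw [Real.sqrt_mul' _ (sq_nonneg _), Real.sqrt_sq (norm_nonneg _)]

variable {g : E → EReal} {lam : ℝ} {w v p q : E}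

/-- `(w - p) / λ` is a subgradient of `g` at `p`. -/
theorem IsProxPoint.mul_sub_le_inner (hp : IsProxPoint g lam w p) (hlam : 0 ≤ lam)
    (hconv : ∀ x z : E, ∀ t : ℝ, 0 ≤ t → t ≤ 1 →
      g (t • x + (1 - t) • z) ≤ (t : EReal) * g x + ((1 - t : ℝ) : EReal) * g z)
    {gp gq : ℝ} (hgp : g p = gp) (hgq : g q = gq) :
    lam * (gp - gq) ≤ ⟪w - p, p - q⟫ := by
  refine le_of_forall_mem_Ioc_le_add_mul (c := ‖p - q‖ ^ 2 / 2) fun t ⟨ht0, ht1⟩ => ?_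
  have hmin := (hp (t • q + (1 - t) • p)).trans
    (add_le_add_left (mul_le_mul_of_nonneg_left (hconv q p t ht0.le ht1)
      (EReal.coe_nonneg.mpr hlam)) _)
  rw [hgp, hgq] at hmin
  have hmin' : lam * gp + ‖w - p‖ ^ 2 / 2 ≤
      lam * (t * gq + (1 - t) * gp) + ‖w - (t • q + (1 - t) • p)‖ ^ 2 / 2 := by
    exact_mod_cast hmin
  have hexpand : ‖w - (t • q + (1 - t) • p)‖ ^ 2 =
      ‖w - p‖ ^ 2 + 2 * (t * ⟪w - p, p - q⟫) + t ^ 2 * ‖p - q‖ ^ 2 := by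
    rw [show w - (t • q + (1 - t) • p) = (w - p) + t • (p - q) by module, norm_add_sq_real,
      real_inner_smul_right, norm_smul, mul_pow, Real.norm_eq_abs, sq_abs]
  rw [hexpand] at hmin'
  have : t * (lam * (gp - gq)) ≤ t * (⟪w - p, p - q⟫ + t * (‖p - q‖ ^ 2 / 2)) := by
    nlinarith
  exact le_of_mul_le_mul_left this ht0

theorem IsProxPoint.norm_sub_sq_le_inner (hp : IsProxPoint g lam w p)
    (hq : IsProxPoint g lam v q) (hlam : 0 ≤ lam)
    (hconv : ∀ x z : E, ∀ t : ℝ, 0 ≤ t → t ≤ 1 →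
      g (t • x + (1 - t) • z) ≤ (t : EReal) * g x + ((1 - t : ℝ) : EReal) * g z)
    {gp gq : ℝ} (hgp : g p = gp) (hgq : g q = gq) :
    ‖p - q‖ ^ 2 ≤ ⟪w - v, p - q⟫ := by
  have hpq := hp.mul_sub_le_inner hlam hconv hgp hgq
  have hqp := hq.mul_sub_le_inner hlam hconv hgq hgp
  have hsplit : ⟪w - v, p - q⟫ = ⟪w - p, p - q⟫ + ⟪v - q, q - p⟫ + ‖p - q‖ ^ 2 := by
    rw [show w - v = (w - p) - (v - q) + (p - q) by abel, inner_add_left, inner_sub_left,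
      real_inner_self_eq_norm_sq, ← neg_sub p q, inner_neg_right, sub_eq_add_neg]
  linarith

end InnerProductSpace

theorem sqrt_one_sub_le_one_div_sqrt_one_add {a : ℝ} (ha : 0 ≤ a) :
    √(1 - a) ≤ 1 / √(1 + a) := by
  rw [le_div_iff₀ (by positivity), ← Real.sqrt_mul' _ (by linarith), Real.sqrt_le_one]
  nlinarith

theorem one_div_sqrt_one_add_lt_one {a : ℝ} (ha : 0 < a) : 1 / √(1 + a) < 1 := by
  rw [div_lt_one (by positivity), Real.lt_sqrt zero_le_one]
  linarith

theorem stmt_7_general {n : ℕ} (F : EuclideanSpace ℝ (Fin n) → EuclideanSpace ℝ (Fin n))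
    (g : EuclideanSpace ℝ (Fin n) → EReal) (μ L lam : ℝ) (hL : 0 < L)
    (hmono : ∀ x z, μ * ‖x - z‖ ^ 2 ≤ ⟪F x - F z, x - z⟫)
    (hlip : ∀ x z, ‖F x - F z‖ ≤ L * ‖x - z‖)
    (hproper : ∃ x, g x ≠ ⊤) (hnobot : ∀ x, g x ≠ ⊥)
    (hconv : ∀ x z : EuclideanSpace ℝ (Fin n), ∀ t : ℝ, 0 ≤ t → t ≤ 1 →
      g (t • x + (1 - t) • z) ≤ (t : EReal) * g x + ((1 - t : ℝ) : EReal) * g z)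
    (hlam : lam ∈ Set.Ioo 0 (2 * μ / L ^ 2))
    (y : EuclideanSpace ℝ (Fin n) → EuclideanSpace ℝ (Fin n))
    (hy : ∀ x z, (lam : EReal) * g (y x) + ((‖(x - lam • F x) - y x‖ ^ 2 / 2 : ℝ) : EReal) ≤
      (lam : EReal) * g z + ((‖(x - lam • F x) - z‖ ^ 2 / 2 : ℝ) : EReal))
    (xstar : EuclideanSpace ℝ (Fin n))
    (hfix : y xstar = xstar) :
    (∀ x, (1 - 1 / Real.sqrt (1 + 2 * lam * μ - lam ^ 2 * L ^ 2)) * ‖x - xstar‖ ^ 2 ≤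
        ⟪x - xstar, x - y x⟫) ∧
      ∀ x, x ≠ xstar → 0 < ⟪x - xstar, x - y x⟫ := by
  obtain ⟨hlam0, hlam2⟩ := hlam
  set a := 2 * lam * μ - lam ^ 2 * L ^ 2
  have ha : 0 < a := by
    have : lam * L ^ 2 < 2 * μ := (lt_div_iff₀ (by positivity)).mp hlam2
    nlinarith
  rw [show 1 + 2 * lam * μ - lam ^ 2 * L ^ 2 = 1 + a by ring]
  set c := 1 / √(1 + a)
  have hprox : ∀ x, IsProxPoint g lam (x - lam • F x) (y x) := hy
  have hreal : ∀ x, g (y x) = ((g (y x)).toReal : EReal) := fun x =>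
    (EReal.coe_toReal ((hprox x).ne_top hlam0 hproper) (hnobot _)).symm
  have hcontr : ∀ x, ‖y x - xstar‖ ≤ c * ‖x - xstar‖ := fun x =>
    calc ‖y x - xstar‖ = ‖y x - y xstar‖ := by rw [hfix]
      _ ≤ ‖(x - lam • F x) - (xstar - lam • F xstar)‖ := norm_le_of_sq_le_inner <|
        (hprox x).norm_sub_sq_le_inner (hprox xstar) hlam0.le hconv (hreal x) (hreal xstar)
      _ ≤ √(1 - a) * ‖x - xstar‖ := norm_sub_smul_sub_le hlam0.le (hmono x xstar) (hlip x xstar)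
      _ ≤ c * ‖x - xstar‖ := by gcongr; exact sqrt_one_sub_le_one_div_sqrt_one_add ha.le
  have hbound : ∀ x, (1 - c) * ‖x - xstar‖ ^ 2 ≤ ⟪x - xstar, x - y x⟫ := fun x => by
    simpa only [sub_sub_sub_cancel_right] using mul_norm_sq_le_inner_sub (hcontr x)
  refine ⟨hbound, fun x hx => lt_of_lt_of_le ?_ (hbound x)⟩
  have hc : c < 1 := one_div_sqrt_one_add_lt_one ha
  have hx' : 0 < ‖x - xstar‖ := norm_pos_iff.mpr (sub_ne_zero.mpr hx)
  exact mul_pos (sub_pos.mpr hc) (pow_pos hx' 2)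

/-- Remark 6 of the paper: the residual vector field `X x = x - y x` satisfies
`⟪x - x*, X x⟫ ≥ (1 - c) ‖x - x*‖²`. -/
theorem stmt_7 {n : ℕ} (F : EuclideanSpace ℝ (Fin n) → EuclideanSpace ℝ (Fin n))
    (g : EuclideanSpace ℝ (Fin n) → EReal) (μ L lam : ℝ) (hμ : 0 < μ) (hL : 0 < L)
    (hmono : ∀ x z, μ * ‖x - z‖ ^ 2 ≤ ⟪F x - F z, x - z⟫)
    (hlip : ∀ x z, ‖F x - F z‖ ≤ L * ‖x - z‖)
    (hproper : ∃ x, g x ≠ ⊤) (hnobot : ∀ x, g x ≠ ⊥)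
    (hlsc : LowerSemicontinuous g)
    (hconv : ∀ x z : EuclideanSpace ℝ (Fin n), ∀ t : ℝ, 0 ≤ t → t ≤ 1 →
      g (t • x + (1 - t) • z) ≤ (t : EReal) * g x + ((1 - t : ℝ) : EReal) * g z)
    (hlam : lam ∈ Set.Ioo 0 (2 * μ / L ^ 2))
    (y : EuclideanSpace ℝ (Fin n) → EuclideanSpace ℝ (Fin n))
    (hy : ∀ x z, (lam : EReal) * g (y x) + ((‖(x - lam • F x) - y x‖ ^ 2 / 2 : ℝ) : EReal) ≤
      (lam : EReal) * g z + ((‖(x - lam • F x) - z‖ ^ 2 / 2 : ℝ) : EReal))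
    (xstar : EuclideanSpace ℝ (Fin n))
    (hfix : y xstar = xstar) (huniq : ∀ z, y z = z → z = xstar) :
    (∀ x, (1 - 1 / Real.sqrt (1 + 2 * lam * μ - lam ^ 2 * L ^ 2)) * ‖x - xstar‖ ^ 2 ≤
        ⟪x - xstar, x - y x⟫) ∧
      ∀ x, x ≠ xstar → 0 < ⟪x - xstar, x - y x⟫ :=
  stmt_7_general F g μ L lam hL hmono hlip hproper hnobot hconv hlam y hy xstar hfix
end

section
/- Suppose v : [0,∞) → ℝ is differentiable, nonnegative, and satisfies v̇(t) ≤ -(a v(t)^{γ₁} + b v(t)^{γ₂}) whenever v(t) > 0, where a, b > 0, γ₁ ∈ (0,1), γ₂ > 1. Then v(t) = 0 for all t ≥ T* where T* = 1/(a(1-γ₁)) + 1/(b(γ₂-1)). -/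
open Set Real

/-- Fixed-time stability comparison lemma (Lemma 1 of the paper with γ₃ = 1). -/
theorem stmt_10 (v v' : ℝ → ℝ) (a b γ₁ γ₂ : ℝ) (ha : 0 < a) (hb : 0 < b)
    (hγ₁ : γ₁ ∈ Set.Ioo (0:ℝ) 1) (hγ₂ : 1 < γ₂)
    (hderiv : ∀ t, 0 ≤ t → HasDerivAt v (v' t) t)
    (hnn : ∀ t, 0 ≤ t → 0 ≤ v t)
    (hdec : ∀ t, 0 ≤ t → 0 < v t → v' t ≤ -(a * v t ^ γ₁ + b * v t ^ γ₂)) :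
    ∀ t, 1 / (a * (1 - γ₁)) + 1 / (b * (γ₂ - 1)) ≤ t → v t = 0 := by
  obtain ⟨hγ₁0, hγ₁1⟩ := hγ₁
  have h1γ₁ : 0 < 1 - γ₁ := by linarith
  have hγ₂1 : 0 < γ₂ - 1 := by linarith
  set T₁ := 1 / (a * (1 - γ₁)) with hT₁
  set T₂ := 1 / (b * (γ₂ - 1)) with hT₂
  have hT₁pos : 0 < T₁ := by positivity
  have hT₂pos : 0 < T₂ := by positivity
  have hcont : ContinuousOn v (Ici 0) := fun s hs =>
    ((hderiv s hs).continuousAt).continuousWithinAt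
  have hanti : AntitoneOn v (Ici 0) := by
    apply antitoneOn_of_deriv_nonpos (convex_Ici 0) hcont
    · intro s hs
      rw [interior_Ici] at hs
      exact ((hderiv s hs.le).differentiableAt).differentiableWithinAt
    · intro s hs
      rw [interior_Ici] at hs
      rw [(hderiv s hs.le).deriv]
      rcases lt_or_eq_of_le (hnn s hs.le) with hv | hv
      · have hd := hdec s hs.le hv
        have h1 : 0 < a * v s ^ γ₁ + b * v s ^ γ₂ := by positivity
        linarith
      · have hmin : IsLocalMin v s := by
          filter_upwards [isOpen_Ioi.mem_nhds hs] with r hr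
          rw [← hv]; exact hnn r (le_of_lt hr)
        rw [hmin.hasDerivAt_eq_zero (hderiv s hs.le)]
  intro t ht
  have ht0 : 0 ≤ t := le_trans (by positivity) ht
  by_contra hne
  have hvt : 0 < v t := lt_of_le_of_ne (hnn t ht0) (Ne.symm hne)
  have hpos : ∀ s, 0 ≤ s → s ≤ t → 0 < v s := fun s hs hst =>
    lt_of_lt_of_le hvt (hanti (mem_Ici.2 hs) (mem_Ici.2 ht0) hst)
  have hT₂t : T₂ ≤ t := by linarith
  -- Phase 1 : on [0, T₂], the function v^(1-γ₂) increases at rate ≥ (γ₂-1)·b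
  have key1 : (γ₂ - 1) * b * (T₂ - 0) ≤ v T₂ ^ (1 - γ₂) - v 0 ^ (1 - γ₂) := by
    apply Convex.mul_sub_le_image_sub_of_le_deriv (convex_Icc 0 T₂)
      (f := fun s => v s ^ (1 - γ₂))
    · apply ContinuousOn.rpow_const (hcont.mono (Icc_subset_Ici_self))
      intro s hs
      exact Or.inl (hpos s hs.1 (hs.2.trans hT₂t)).ne'
    · intro s hs
      rw [interior_Icc] at hs
      have hx : 0 < v s := hpos s hs.1.le (hs.2.le.trans hT₂t)
      exact (((hderiv s hs.1.le).rpow_const (Or.inl hx.ne')).differentiableAt).differentiableWithinAt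
    · intro s hs
      rw [interior_Icc] at hs
      have hx : 0 < v s := hpos s hs.1.le (hs.2.le.trans hT₂t)
      rw [((hderiv s hs.1.le).rpow_const (Or.inl hx.ne')).deriv]
      have hd := hdec s hs.1.le hx
      have hp : 0 < v s ^ (1 - γ₂ - 1) := rpow_pos_of_pos hx _
      have hq : 0 < v s ^ γ₁ := rpow_pos_of_pos hx _
      have hpr : v s ^ (1 - γ₂ - 1) * v s ^ γ₂ = v s ^ (1 - γ₂ - 1 + γ₂) := by
        rw [← Real.rpow_add hx]
      have h2 : v s ^ (1 - γ₂ - 1 + γ₂) = 1 := by norm_num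
      rw [h2] at hpr
      have hle : (1 - γ₂) * v s ^ (1 - γ₂ - 1) ≤ 0 := by nlinarith
      have h5 := mul_le_mul_of_nonpos_left hd hle
      have key : (1 - γ₂) * v s ^ (1 - γ₂ - 1) * (-(a * v s ^ γ₁ + b * v s ^ γ₂)) =
          (γ₂ - 1) * a * (v s ^ (1 - γ₂ - 1) * v s ^ γ₁) + (γ₂ - 1) * b := by
        linear_combination ((γ₂ - 1) * b) * hpr
      have h6 : 0 ≤ (γ₂ - 1) * a * (v s ^ (1 - γ₂ - 1) * v s ^ γ₁) :=
        le_of_lt (mul_pos (mul_pos hγ₂1 ha) (mul_pos hp hq))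
      linarith
    · exact ⟨le_refl 0, hT₂pos.le⟩
    · exact ⟨hT₂pos.le, le_refl T₂⟩
    · exact hT₂pos.le
  have hT₂eq : (γ₂ - 1) * b * (T₂ - 0) = 1 := by
    rw [hT₂]; field_simp; ring
  have h0pos : 0 < v 0 ^ (1 - γ₂) := rpow_pos_of_pos (hpos 0 le_rfl ht0) _
  have hvT₂pos : 0 < v T₂ := hpos T₂ hT₂pos.le hT₂t
  have hgt1 : 1 < v T₂ ^ (1 - γ₂) := by linarith
  have hvT₂lt1 : v T₂ < 1 := by
    rcases (Real.one_lt_rpow_iff_of_pos hvT₂pos).1 hgt1 with ⟨_, h⟩ | ⟨h, _⟩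
    · linarith
    · exact h
  -- Phase 2 : on [T₂, t], the function v^(1-γ₁) decreases at rate ≥ (1-γ₁)·a
  have key2 : v t ^ (1 - γ₁) - v T₂ ^ (1 - γ₁) ≤ (-((1 - γ₁) * a)) * (t - T₂) := by
    apply Convex.image_sub_le_mul_sub_of_deriv_le (convex_Icc T₂ t)
      (f := fun s => v s ^ (1 - γ₁))
    · apply ContinuousOn.rpow_const (hcont.mono (fun s hs => le_trans hT₂pos.le hs.1))
      intro s hs
      exact Or.inl (hpos s (hT₂pos.le.trans hs.1) hs.2).ne'
    · intro s hs
      rw [interior_Icc] at hs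
      have hx : 0 < v s := hpos s (hT₂pos.le.trans hs.1.le) hs.2.le
      exact (((hderiv s (hT₂pos.le.trans hs.1.le)).rpow_const
        (Or.inl hx.ne')).differentiableAt).differentiableWithinAt
    · intro s hs
      rw [interior_Icc] at hs
      have hs0 : 0 ≤ s := hT₂pos.le.trans hs.1.le
      have hx : 0 < v s := hpos s hs0 hs.2.le
      rw [((hderiv s hs0).rpow_const (Or.inl hx.ne')).deriv]
      have hd := hdec s hs0 hx
      have hp : 0 < v s ^ (1 - γ₁ - 1) := rpow_pos_of_pos hx _
      have hr : 0 < v s ^ γ₂ := rpow_pos_of_pos hx _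
      have hpq : v s ^ (1 - γ₁ - 1) * v s ^ γ₁ = v s ^ (1 - γ₁ - 1 + γ₁) := by
        rw [← Real.rpow_add hx]
      have h2 : v s ^ (1 - γ₁ - 1 + γ₁) = 1 := by norm_num
      rw [h2] at hpq
      have hge : 0 ≤ (1 - γ₁) * v s ^ (1 - γ₁ - 1) := le_of_lt (mul_pos h1γ₁ hp)
      have h5 := mul_le_mul_of_nonneg_left hd hge
      have key : (1 - γ₁) * v s ^ (1 - γ₁ - 1) * (-(a * v s ^ γ₁ + b * v s ^ γ₂)) =
          -((1 - γ₁) * a) - (1 - γ₁) * b * (v s ^ (1 - γ₁ - 1) * v s ^ γ₂) := by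
        linear_combination (-((1 - γ₁) * a)) * hpq
      have h6 : 0 ≤ (1 - γ₁) * b * (v s ^ (1 - γ₁ - 1) * v s ^ γ₂) :=
        le_of_lt (mul_pos (mul_pos h1γ₁ hb) (mul_pos hp hr))
      linarith
    · exact ⟨le_refl T₂, hT₂t⟩
    · exact ⟨hT₂t, le_refl t⟩
    · exact hT₂t
  have hT₁eq : (1 - γ₁) * a * T₁ = 1 := by
    rw [hT₁]; field_simp
  have hle1 : v T₂ ^ (1 - γ₁) ≤ 1 :=
    Real.rpow_le_one hvT₂pos.le hvT₂lt1.le h1γ₁.le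
  have hfin : 0 < v t ^ (1 - γ₁) := rpow_pos_of_pos hvt _
  have hta : (1 - γ₁) * a * T₁ ≤ (1 - γ₁) * a * (t - T₂) := by
    apply mul_le_mul_of_nonneg_left (by linarith) (by positivity)
  nlinarith
end

section
/- Suppose v : [0,∞) → ℝ is differentiable, nonnegative, and satisfies v̇(t) ≤ -(a v(t)^{1-1/ξ} + b v(t)^{1+1/ξ}) whenever v(t) > 0, where a, b > 0 and ξ > 1. Then for all t ∈ [0, τ̂], where τ̂ = (ξ/√(ab)) arctan(√(b/a) v(0)^{1/ξ}), one has v(t) ≤ ( √(a/b) tan( arctan(√(b/a) v(0)^{1/ξ}) - (√(ab)/ξ) t ) )^{ξ}. In particular v(τ̂) = 0 and τ̂ ≤ ξπ/(2√(ab)). -/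
/-!
The function `v` is nonincreasing, so once positive on `[0, t]` it stays positive there. On that
interval `w = v ^ (1/ξ)` satisfies the Riccati inequality `ẇ ≤ -(1/ξ) (a + b w²)`, which makes
`arctan (√(b/a) w(s)) + (√(ab)/ξ) s` nonincreasing. Inverting the arctangent gives the tangent
bound; at `τ̂` the tangent vanishes, forcing `v τ̂ = 0`, and `arctan < π/2` bounds `τ̂`.
-/

open Real Set

theorem sqrt_div_mul_self {a b : ℝ} (ha : 0 < a) : √(b / a) * a = √(a * b) := by
  rw [show a * b = b / a * a ^ 2 by field_simp, Real.sqrt_mul' _ (sq_nonneg a),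
    Real.sqrt_sq ha.le]

theorem sqrt_div_mul_sqrt_div {a b : ℝ} (ha : 0 < a) (hb : 0 < b) :
    √(a / b) * √(b / a) = 1 := by
  rw [← Real.sqrt_mul (div_pos ha hb).le, div_mul_div_cancel₀ hb.ne', div_self ha.ne',
    Real.sqrt_one]

theorem le_tan_of_arctan_le {x y : ℝ} (h : arctan x ≤ y) (hy : y < π / 2) : x ≤ tan y := by
  rwa [← arctan_le_arctan_iff, arctan_tan (by linarith [neg_pi_div_two_lt_arctan x]) hy]

theorem antitoneOn_Ici_of_nonneg_of_deriv_nonpos_of_pos {v v' : ℝ → ℝ} {t₀ : ℝ}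
    (hderiv : ∀ t, t₀ ≤ t → HasDerivAt v (v' t) t) (hnn : ∀ t, t₀ ≤ t → 0 ≤ v t)
    (hdec : ∀ t, t₀ ≤ t → 0 < v t → v' t ≤ 0) : AntitoneOn v (Ici t₀) := by
  refine antitoneOn_of_hasDerivWithinAt_nonpos (convex_Ici t₀)
    (fun t ht => (hderiv t ht).continuousAt.continuousWithinAt)
    (fun t ht => (hderiv t (interior_subset ht)).hasDerivWithinAt) fun t ht => ?_
  rw [interior_Ici] at ht
  rcases (hnn t ht.le).lt_or_eq with hpos | hzero
  · exact hdec t ht.le hpos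
  · -- a zero of a nonnegative function is an interior minimum
    have hmin : IsLocalMin v t := by
      filter_upwards [eventually_gt_nhds ht] with s hs
      exact hzero ▸ hnn s hs.le
    exact (hmin.hasDerivAt_eq_zero (hderiv t ht.le)).le

theorem mul_rpow_sub_one_mul_le {x y a b p : ℝ} (hx : 0 < x) (hp : 0 ≤ p)
    (hy : y ≤ -(a * x ^ (1 - p) + b * x ^ (1 + p))) :
    p * x ^ (p - 1) * y ≤ -(p * (a + b * (x ^ p) ^ 2)) := by
  have h₁ : x ^ (p - 1) * x ^ (1 - p) = 1 := by
    rw [← rpow_add hx, show p - 1 + (1 - p) = 0 by ring, rpow_zero]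
  have h₂ : x ^ (p - 1) * x ^ (1 + p) = (x ^ p) ^ 2 := by
    rw [← rpow_add hx, ← rpow_natCast, ← rpow_mul hx.le]
    ring_nf
  calc p * x ^ (p - 1) * y ≤ p * x ^ (p - 1) * -(a * x ^ (1 - p) + b * x ^ (1 + p)) :=
        mul_le_mul_of_nonneg_left hy (by positivity)
    _ = -(p * (a * (x ^ (p - 1) * x ^ (1 - p)) + b * (x ^ (p - 1) * x ^ (1 + p)))) := by ring
    _ = -(p * (a + b * (x ^ p) ^ 2)) := by rw [h₁, h₂, mul_one]

theorem one_div_one_add_sq_mul_le {w w' a b p : ℝ} (ha : 0 < a) (hb : 0 < b)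
    (hw' : w' ≤ -(p * (a + b * w ^ 2))) :
    1 / (1 + (√(b / a) * w) ^ 2) * (√(b / a) * w') ≤ -(p * √(a * b)) := by
  -- `a + b w² = a (1 + (√(b/a) w)²)`, so the quotient collapses to `√(b/a) a = √(ab)`
  calc 1 / (1 + (√(b / a) * w) ^ 2) * (√(b / a) * w')
      ≤ 1 / (1 + (√(b / a) * w) ^ 2) * (√(b / a) * -(p * (a + b * w ^ 2))) := by gcongr
    _ = -(p * (√(b / a) * a)) := by
        rw [mul_pow, sq_sqrt (div_pos hb ha).le]
        field_simp
    _ = -(p * √(a * b)) := by rw [sqrt_div_mul_self ha]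

theorem arctan_mul_le_of_deriv_le {w w' : ℝ → ℝ} {a b p t₀ t₁ : ℝ} (ha : 0 < a) (hb : 0 < b)
    (hw : ∀ s ∈ Icc t₀ t₁, HasDerivAt w (w' s) s)
    (hw' : ∀ s ∈ Icc t₀ t₁, w' s ≤ -(p * (a + b * w s ^ 2))) (ht : t₀ ≤ t₁) :
    arctan (√(b / a) * w t₁) ≤ arctan (√(b / a) * w t₀) - p * √(a * b) * (t₁ - t₀) := by
  set H : ℝ → ℝ := fun s => arctan (√(b / a) * w s) + p * √(a * b) * s
  have hH : ∀ s ∈ Icc t₀ t₁, HasDerivAt H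
      (1 / (1 + (√(b / a) * w s) ^ 2) * (√(b / a) * w' s) + p * √(a * b) * 1) s := fun s hs =>
    ((hasDerivAt_arctan _).comp s ((hw s hs).const_mul _)).add ((hasDerivAt_id s).const_mul _)
  have hanti : AntitoneOn H (Icc t₀ t₁) :=
    antitoneOn_of_hasDerivWithinAt_nonpos (convex_Icc t₀ t₁)
      (fun s hs => (hH s hs).continuousAt.continuousWithinAt)
      (fun s hs => (hH s (interior_subset hs)).hasDerivWithinAt)
      fun s hs => by
        have := one_div_one_add_sq_mul_le ha hb (hw' s (interior_subset hs))
        linarith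
  have := hanti (left_mem_Icc.2 ht) (right_mem_Icc.2 ht) ht
  simp only [H] at this
  linarith

theorem rpow_le_tan_of_pos {v v' : ℝ → ℝ} {a b p t₀ t₁ : ℝ} (ha : 0 < a) (hb : 0 < b)
    (hp : 0 < p) (hderiv : ∀ s ∈ Icc t₀ t₁, HasDerivAt v (v' s) s)
    (hpos : ∀ s ∈ Icc t₀ t₁, 0 < v s)
    (hdec : ∀ s ∈ Icc t₀ t₁, v' s ≤ -(a * v s ^ (1 - p) + b * v s ^ (1 + p))) (ht : t₀ ≤ t₁) :
    v t₁ ^ p ≤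
      √(a / b) * tan (arctan (√(b / a) * v t₀ ^ p) - p * √(a * b) * (t₁ - t₀)) := by
  have hw : ∀ s ∈ Icc t₀ t₁, HasDerivAt (fun s => v s ^ p) (p * v s ^ (p - 1) * v' s) s :=
    fun s hs => (hasDerivAt_rpow_const (Or.inl (hpos s hs).ne')).comp s (hderiv s hs)
  have harctan := arctan_mul_le_of_deriv_le ha hb hw
    (fun s hs => mul_rpow_sub_one_mul_le (hpos s hs) hp.le (hdec s hs)) ht
  have hangle : arctan (√(b / a) * v t₀ ^ p) - p * √(a * b) * (t₁ - t₀) < π / 2 := by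
    have : 0 ≤ p * √(a * b) * (t₁ - t₀) := by have := sub_nonneg.2 ht; positivity
    linarith [arctan_lt_pi_div_two (√(b / a) * v t₀ ^ p)]
  calc v t₁ ^ p = √(a / b) * (√(b / a) * v t₁ ^ p) := by
        rw [← mul_assoc, sqrt_div_mul_sqrt_div ha hb, one_mul]
    _ ≤ _ := by gcongr; exact le_tan_of_arctan_le harctan hangle

theorem rpow_le_tan_of_nonneg {v v' : ℝ → ℝ} {a b p t : ℝ} (ha : 0 < a) (hb : 0 < b)
    (hp : 0 < p) (hderiv : ∀ s, 0 ≤ s → HasDerivAt v (v' s) s) (hnn : ∀ s, 0 ≤ s → 0 ≤ v s)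
    (hdec : ∀ s, 0 ≤ s → 0 < v s → v' s ≤ -(a * v s ^ (1 - p) + b * v s ^ (1 + p)))
    (ht : 0 ≤ t) (htθ : p * √(a * b) * t ≤ arctan (√(b / a) * v 0 ^ p)) :
    v t ^ p ≤ √(a / b) * tan (arctan (√(b / a) * v 0 ^ p) - p * √(a * b) * t) := by
  rcases (hnn t ht).eq_or_lt with hzero | hpos
  · rw [← hzero, zero_rpow hp.ne']
    have hct : 0 ≤ p * √(a * b) * t := by positivity
    exact mul_nonneg (sqrt_nonneg _) (tan_nonneg_of_nonneg_of_le_pi_div_two (sub_nonneg.2 htθ)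
      (by linarith [arctan_lt_pi_div_two (√(b / a) * v 0 ^ p)]))
  · have hanti : AntitoneOn v (Ici 0) := antitoneOn_Ici_of_nonneg_of_deriv_nonpos_of_pos hderiv
      hnn fun s hs hv => (hdec s hs hv).trans (neg_nonpos.2 (by positivity))
    have hpos' : ∀ s ∈ Icc 0 t, 0 < v s := fun s hs => hpos.trans_le (hanti hs.1 ht hs.2)
    simpa only [sub_zero] using rpow_le_tan_of_pos ha hb hp (fun s hs => hderiv s hs.1) hpos'
      (fun s hs => hdec s hs.1 (hpos' s hs)) ht

/-- Explicit tangent-function bound from the proof of Theorem 3 of the paper. -/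
theorem stmt_11 (v v' : ℝ → ℝ) (a b ξ : ℝ) (ha : 0 < a) (hb : 0 < b) (hξ : 1 < ξ)
    (hderiv : ∀ t, 0 ≤ t → HasDerivAt v (v' t) t)
    (hnn : ∀ t, 0 ≤ t → 0 ≤ v t)
    (hdec : ∀ t, 0 ≤ t → 0 < v t →
      v' t ≤ -(a * v t ^ (1 - 1 / ξ) + b * v t ^ (1 + 1 / ξ))) :
    (∀ t ∈ Set.Icc (0:ℝ)
        (ξ / Real.sqrt (a * b) * Real.arctan (Real.sqrt (b / a) * v 0 ^ (1 / ξ))),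
      v t ≤ (Real.sqrt (a / b) *
        Real.tan (Real.arctan (Real.sqrt (b / a) * v 0 ^ (1 / ξ)) -
          Real.sqrt (a * b) / ξ * t)) ^ ξ) ∧
    v (ξ / Real.sqrt (a * b) * Real.arctan (Real.sqrt (b / a) * v 0 ^ (1 / ξ))) = 0 ∧
    ξ / Real.sqrt (a * b) * Real.arctan (Real.sqrt (b / a) * v 0 ^ (1 / ξ)) ≤
      ξ * Real.pi / (2 * Real.sqrt (a * b)) := by
  have hξ0 : 0 < ξ := by linarith
  set θ := arctan (√(b / a) * v 0 ^ (1 / ξ))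
  have hθ : 0 ≤ θ := arctan_nonneg.2 (mul_nonneg (sqrt_nonneg _) (rpow_nonneg (hnn 0 le_rfl) _))
  have hτ : 0 ≤ ξ / √(a * b) * θ := mul_nonneg (by positivity) hθ
  have hτθ : √(a * b) / ξ * (ξ / √(a * b) * θ) = θ := by field_simp
  have bound : ∀ t ∈ Icc 0 (ξ / √(a * b) * θ),
      v t ≤ (√(a / b) * tan (θ - √(a * b) / ξ * t)) ^ ξ := by
    rintro t ⟨ht0, htτ⟩
    have hct : √(a * b) / ξ * t ≤ θ := hτθ ▸ mul_le_mul_of_nonneg_left htτ (by positivity)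
    have h := rpow_le_tan_of_nonneg ha hb (one_div_pos.2 hξ0) hderiv hnn hdec ht0
      (by rwa [one_div_mul_eq_div])
    rw [one_div_mul_eq_div] at h
    calc v t = (v t ^ (1 / ξ)) ^ ξ := by
          rw [← rpow_mul (hnn t ht0), one_div_mul_cancel hξ0.ne', rpow_one]
      _ ≤ _ := rpow_le_rpow (rpow_nonneg (hnn t ht0) _) h hξ0.le
  refine ⟨bound, ?_, ?_⟩
  · have h := bound _ ⟨hτ, le_rfl⟩
    rw [hτθ, sub_self, tan_zero, mul_zero, zero_rpow hξ0.ne'] at h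
    exact h.antisymm (hnn _ hτ)
  · calc ξ / √(a * b) * θ ≤ ξ / √(a * b) * (π / 2) := by
          gcongr; exact (arctan_lt_pi_div_two _).le
      _ = ξ * π / (2 * √(a * b)) := by field_simp
end

section
/- Let f : ℝⁿ → ℝ be differentiable with strongly pseudomonotone gradient of modulus μ > 0: for all x, y, ⟨∇f(y), x - y⟩ ≥ 0 implies ⟨∇f(x), x - y⟩ ≥ μ‖x - y‖². If additionally f is convex, then f is strongly pseudoconvex with modulus μ: ⟨∇f(y), x - y⟩ ≥ 0 implies f(x) ≥ f(y) + (μ/2)‖x - y‖². -/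
/-! Along the segment `z + t • (x - z)` the directional derivative of `f` is at least
`μ * t * ‖x - z‖ ^ 2`, by strong pseudomonotonicity applied to the pair `(z + t • (x - z), z)`.
Hence `t ↦ f (z + t • (x - z)) - μ / 2 * t ^ 2 * ‖x - z‖ ^ 2` is monotone on `[0, 1]`. -/

lemma add_half_le_of_mul_le_deriv {g g' : ℝ → ℝ} {c : ℝ}
    (hg : ∀ t ∈ Set.Icc (0 : ℝ) 1, HasDerivAt g (g' t) t)
    (hc : ∀ t ∈ Set.Ioo (0 : ℝ) 1, c * t ≤ g' t) : g 0 + c / 2 ≤ g 1 := by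
  set h : ℝ → ℝ := fun t => g t - c / 2 * t ^ 2
  have hh : ∀ t ∈ Set.Icc (0 : ℝ) 1, HasDerivAt h (g' t - c * t) t := fun t ht => by
    refine ((hg t ht).sub ((hasDerivAt_pow 2 t).const_mul (c / 2))).congr_deriv ?_
    norm_num
    ring
  have hmono : MonotoneOn h (Set.Icc 0 1) := by
    refine monotoneOn_of_hasDerivWithinAt_nonneg (f' := fun t => g' t - c * t)
      (convex_Icc 0 1) (fun t ht => (hh t ht).continuousAt.continuousWithinAt)
      (fun t ht => (hh t (interior_subset ht)).hasDerivWithinAt) fun t ht => ?_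
    rw [interior_Icc] at ht
    exact sub_nonneg.mpr (hc t ht)
  have h01 : h 0 ≤ h 1 :=
    hmono (Set.left_mem_Icc.mpr zero_le_one) (Set.right_mem_Icc.mpr zero_le_one) zero_le_one
  simp only [h] at h01
  linarith

section

variable {E : Type*} [NormedAddCommGroup E] [NormedSpace ℝ E]

lemma mul_sq_norm_le_fderiv_of_stronglyPseudomonotone {f : E → ℝ} {μ : ℝ}
    (hsp : ∀ x z, 0 ≤ fderiv ℝ f z (x - z) → μ * ‖x - z‖ ^ 2 ≤ fderiv ℝ f x (x - z))
    {z v : E} (hv : 0 ≤ fderiv ℝ f z v) {t : ℝ} (ht : 0 < t) :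
    μ * t * ‖v‖ ^ 2 ≤ fderiv ℝ f (z + t • v) v := by
  have key := hsp (z + t • v) z (by simpa using mul_nonneg ht.le hv)
  rw [add_sub_cancel_left, map_smul, smul_eq_mul, norm_smul, Real.norm_of_nonneg ht.le] at key
  exact le_of_mul_le_mul_left (by linarith) ht

theorem add_half_mul_sq_norm_le_of_stronglyPseudomonotone {f : E → ℝ} {μ : ℝ}
    (hf : Differentiable ℝ f)
    (hsp : ∀ x z, 0 ≤ fderiv ℝ f z (x - z) → μ * ‖x - z‖ ^ 2 ≤ fderiv ℝ f x (x - z))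
    {x z : E} (hxz : 0 ≤ fderiv ℝ f z (x - z)) : f z + μ / 2 * ‖x - z‖ ^ 2 ≤ f x := by
  have hline : ∀ t : ℝ, HasDerivAt (fun s : ℝ => z + s • (x - z)) (x - z) t := fun t => by
    simpa using ((hasDerivAt_id t).smul_const (x - z)).const_add z
  have hg : ∀ t : ℝ, HasDerivAt (fun s : ℝ => f (z + s • (x - z)))
      (fderiv ℝ f (z + t • (x - z)) (x - z)) t := fun t =>
    (hf _).hasFDerivAt.comp_hasDerivAt t (hline t)
  have hseg := add_half_le_of_mul_le_deriv (c := μ * ‖x - z‖ ^ 2) (fun t _ => hg t) fun t ht => by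
    rw [mul_right_comm]
    exact mul_sq_norm_le_fderiv_of_stronglyPseudomonotone hsp hxz ht.1
  simpa [mul_div_right_comm] using hseg

end

theorem stmt_16_general {n : ℕ} (f : EuclideanSpace ℝ (Fin n) → ℝ) (μ : ℝ)
    (hf : Differentiable ℝ f)
    (hsp : ∀ x z, 0 ≤ fderiv ℝ f z (x - z) → μ * ‖x - z‖ ^ 2 ≤ fderiv ℝ f x (x - z)) :
    ∀ x z, 0 ≤ fderiv ℝ f z (x - z) → f z + μ / 2 * ‖x - z‖ ^ 2 ≤ f x :=
  fun _ _ => add_half_mul_sq_norm_le_of_stronglyPseudomonotone hf hsp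

/-- A differentiable convex function with strongly pseudomonotone gradient is
strongly pseudoconvex with the same modulus. -/
theorem stmt_16 {n : ℕ} (f : EuclideanSpace ℝ (Fin n) → ℝ) (μ : ℝ) (hμ : 0 < μ)
    (hf : Differentiable ℝ f)
    (hsp : ∀ x z, 0 ≤ fderiv ℝ f z (x - z) → μ * ‖x - z‖ ^ 2 ≤ fderiv ℝ f x (x - z))
    (hconv : ConvexOn ℝ Set.univ f) :
    ∀ x z, 0 ≤ fderiv ℝ f z (x - z) → f z + μ / 2 * ‖x - z‖ ^ 2 ≤ f x :=
  stmt_16_general f μ hf hsp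
end
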